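/- arXiv:2410.04769 — 2 statements merged into one kernel-verified Lean document; each statement's English description precedes it below -/
import Mathlib

section
/- Let Ω_j, Ω ⊂ ℝ^d be non-empty bounded open convex sets with Ω_j → Ω in the Hausdorff (complementary Hausdorff) distance, and let 1 ≤ m ≤ d−1. Then for every y in P^⊥Ω (the projection of Ω onto the last d−m coordinates) the cross-sections Ω_j(y) = {x ∈ ℝ^m : (x,y) ∈ Ω_j} converge to Ω(y) = {x ∈ ℝ^m : (x,y) ∈ Ω} in the Hausdorff distance. -/
open Metric Filter

section Aux

lemma aux_compl_nonempty {X : Type*} [NormedAddCommGroup X] [NormedSpace ℝ X] [Nontrivial X]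
    {B : Set X} (hB : Bornology.IsBounded B) : Bᶜ.Nonempty := by
  by_contra h
  rw [Set.not_nonempty_iff_eq_empty, Set.compl_empty_iff] at h
  subst h
  exact NormedSpace.unbounded_univ ℝ X hB

lemma aux_le_infDist {X : Type*} [MetricSpace X] {U : Set X} (hne : Uᶜ.Nonempty) {c : X} {r : ℝ}
    (hr : 0 ≤ r) (h : ball c r ⊆ U) : r ≤ infDist c Uᶜ := by
  by_contra hlt
  rw [not_le, infDist_lt_iff hne] at hlt
  obtain ⟨z, hz, hdz⟩ := hlt
  exact hz (h (by rwa [mem_ball, dist_comm]))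

lemma aux_infDist_le_of_thickening {X : Type*} [MetricSpace X] {A B : Set X} {ε : ℝ}
    (hA : A.Nonempty) (h : A ⊆ thickening ε B) (x : X) :
    infDist x B ≤ infDist x A + ε := by
  refine le_of_forall_pos_le_add fun η hη => ?_
  obtain ⟨a, ha, hda⟩ := (infDist_lt_iff hA).mp (lt_add_of_pos_right _ hη)
  obtain ⟨b, hb, hdb⟩ := mem_thickening_iff.mp (h ha)
  calc infDist x B ≤ dist x b := infDist_le_dist_of_mem hb
    _ ≤ dist x a + dist a b := dist_triangle _ _ _
    _ ≤ infDist x A + ε + η := by linarith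

/-- Core geometric lemma: if a convex set `U ⊆ ball 0 R` contains a ball of radius `r` around
`(x₀, y)` and the slice at `y` contains `ball x ε`, then `U` contains a ball of radius
`ε/(2(2R+ε)) * r` around `(x, y)`. -/
lemma aux_core {E F : Type*} [NormedAddCommGroup E] [NormedSpace ℝ E]
    [NormedAddCommGroup F] [NormedSpace ℝ F]
    {U : Set (E × F)} (hU : Convex ℝ U) {R r ε : ℝ} (hR : U ⊆ ball 0 R)
    {x₀ : E} {y : F} (hball : ball ((x₀, y) : E × F) r ⊆ U)
    (hr : 0 < r) (hε : 0 < ε) {x : E} (hx : ball x ε ⊆ {x' : E | (x', y) ∈ U}) :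
    ball ((x, y) : E × F) (ε / (2 * (2 * R + ε)) * r) ⊆ U := by
  have hc : ((x₀, y) : E × F) ∈ U := hball (mem_ball_self hr)
  have hRpos : 0 < R := lt_of_le_of_lt (norm_nonneg _) (mem_ball_zero_iff.mp (hR hc))
  set t : ℝ := ε / (2 * (2 * R + ε)) with ht_def
  have ht0 : 0 < t := by positivity
  have ht2 : t ≤ 1 / 2 := by
    rw [ht_def, div_le_div_iff₀ (by positivity) (by norm_num)]
    nlinarith
  have hxU : ((x, y) : E × F) ∈ U := hx (mem_ball_self hε)
  have hD : dist x x₀ < 2 * R := by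
    have h1 : dist x x₀ ≤ dist ((x, y) : E × F) ((x₀, y) : E × F) := by
      rw [Prod.dist_eq]; exact le_max_left _ _
    have h2 : ‖((x, y) : E × F)‖ < R := mem_ball_zero_iff.mp (hR hxU)
    have h3 : ‖((x₀, y) : E × F)‖ < R := mem_ball_zero_iff.mp (hR hc)
    have h4 : dist ((x, y) : E × F) ((x₀, y) : E × F) ≤ ‖((x, y) : E × F)‖ + ‖((x₀, y) : E × F)‖ :=
      dist_le_norm_add_norm _ _
    linarith
  have htD : t * (2 * R) ≤ ε / 2 := by
    rw [ht_def]
    rw [div_mul_eq_mul_div, div_le_div_iff₀ (by positivity) (by norm_num)]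
    nlinarith
  rintro ⟨u, v⟩ hp
  rw [mem_ball, Prod.dist_eq, max_lt_iff] at hp
  obtain ⟨hu, hv⟩ := hp
  set M : ℝ := (1 - t) * ε + t * r with hM_def
  have hM0 : 0 < M := by nlinarith
  set w : E := (u - x) + t • (x - x₀) with hw_def
  have hw : ‖w‖ < M := by
    have h1 : ‖w‖ ≤ ‖u - x‖ + ‖t • (x - x₀)‖ := norm_add_le _ _
    have h2 : ‖t • (x - x₀)‖ = t * ‖x - x₀‖ := by
      rw [norm_smul, Real.norm_eq_abs, abs_of_pos ht0]
    have h3 : ‖u - x‖ = dist u x := (dist_eq_norm u x).symm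
    have h4 : ‖x - x₀‖ = dist x x₀ := (dist_eq_norm x x₀).symm
    have h5 : t * dist x x₀ ≤ t * (2 * R) := by nlinarith
    rw [hM_def]; rw [h2, h3, h4] at h1
    nlinarith
  set a : E := x + (ε / M) • w with ha_def
  set b₁ : E := x₀ + (r / M) • w with hb₁_def
  set b₂ : F := y + t⁻¹ • (v - y) with hb₂_def
  have ha : a ∈ ball x ε := by
    rw [mem_ball, dist_eq_norm, ha_def]
    simp only [add_sub_cancel_left]
    rw [norm_smul, Real.norm_eq_abs, abs_of_pos (by positivity : (0:ℝ) < ε / M)]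
    calc ε / M * ‖w‖ < ε / M * M := by
          exact mul_lt_mul_of_pos_left hw (by positivity)
      _ = ε := by field_simp
  have hb : ((b₁, b₂) : E × F) ∈ ball ((x₀, y) : E × F) r := by
    rw [mem_ball, Prod.dist_eq, max_lt_iff]
    constructor
    · rw [dist_eq_norm, hb₁_def]
      simp only [add_sub_cancel_left]
      rw [norm_smul, Real.norm_eq_abs, abs_of_pos (by positivity : (0:ℝ) < r / M)]
      calc r / M * ‖w‖ < r / M * M := mul_lt_mul_of_pos_left hw (by positivity)
        _ = r := by field_simp
    · rw [dist_eq_norm, hb₂_def]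
      simp only [add_sub_cancel_left]
      rw [norm_smul, Real.norm_eq_abs, abs_of_pos (by positivity : (0:ℝ) < t⁻¹)]
      have hvy : ‖v - y‖ < t * r := by rwa [← dist_eq_norm]
      calc t⁻¹ * ‖v - y‖ < t⁻¹ * (t * r) := mul_lt_mul_of_pos_left hvy (by positivity)
        _ = r := by field_simp
  have haU : ((a, y) : E × F) ∈ U := hx ha
  have hbU : ((b₁, b₂) : E × F) ∈ U := hball hb
  have key : (1 - t) • ((a, y) : E × F) + t • ((b₁, b₂) : E × F) ∈ U :=
    hU haU hbU (by linarith) ht0.le (by ring)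
  have heq : (1 - t) • ((a, y) : E × F) + t • ((b₁, b₂) : E × F) = ((u, v) : E × F) := by
    have hMne : M ≠ 0 := ne_of_gt hM0
    have htne : t ≠ 0 := ne_of_gt ht0
    apply Prod.ext
    · show (1 - t) • a + t • b₁ = u
      rw [ha_def, hb₁_def, hw_def]
      match_scalars
      all_goals field_simp
      all_goals ring
    · show (1 - t) • y + t • b₂ = v
      rw [hb₂_def]
      match_scalars
      all_goals field_simp
      all_goals ring
  rwa [heq] at key

end Aux

/-- Convergence of cross-sections of convex sets. Let `Ω_j, Ω ⊂ ℝ^m × ℝ^{d−m}` be non-empty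
bounded open convex sets with `Ω_j → Ω` in the complementary Hausdorff distance (which is
equivalent to uniform convergence of the distance functions `x ↦ dist(x, Ω_j^c)` to
`x ↦ dist(x, Ω^c)`). Then for every `y` in the projection `P^⊥Ω` of `Ω` onto the last
`d−m` coordinates, the cross-sections `Ω_j(y) = {x : (x,y) ∈ Ω_j}` converge to
`Ω(y) = {x : (x,y) ∈ Ω}` in the (complementary) Hausdorff distance. -/
theorem crossSection_hausdorff_convergence (m n : ℕ) (hm : 1 ≤ m) (hn : 1 ≤ n)
    (Ωj : ℕ → Set (EuclideanSpace ℝ (Fin m) × EuclideanSpace ℝ (Fin n)))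
    (Ω : Set (EuclideanSpace ℝ (Fin m) × EuclideanSpace ℝ (Fin n)))
    (hjopen : ∀ j, IsOpen (Ωj j)) (hjbdd : ∀ j, Bornology.IsBounded (Ωj j))
    (hjconv : ∀ j, Convex ℝ (Ωj j)) (hjne : ∀ j, (Ωj j).Nonempty)
    (hopen : IsOpen Ω) (hbdd : Bornology.IsBounded Ω) (hconv : Convex ℝ Ω)
    (hne : Ω.Nonempty)
    (hH : TendstoUniformly (fun j x => infDist x (Ωj j)ᶜ) (fun x => infDist x Ωᶜ) atTop)
    (y : EuclideanSpace ℝ (Fin n)) (hy : ∃ x, (x, y) ∈ Ω) :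
    TendstoUniformly
      (fun j x => infDist x {x' : EuclideanSpace ℝ (Fin m) | (x', y) ∈ Ωj j}ᶜ)
      (fun x => infDist x {x' : EuclideanSpace ℝ (Fin m) | (x', y) ∈ Ω}ᶜ) atTop := by
  classical
  haveI : Nonempty (Fin m) := ⟨⟨0, hm⟩⟩
  haveI : Nonempty (Fin n) := ⟨⟨0, hn⟩⟩
  haveI : Nontrivial (EuclideanSpace ℝ (Fin m)) :=
    ⟨⟨EuclideanSpace.single ⟨0, hm⟩ (1 : ℝ), 0, by
      intro h
      simpa [EuclideanSpace.single_apply] using congrArg (fun v : EuclideanSpace ℝ (Fin m) => v ⟨0, hm⟩) h⟩⟩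
  obtain ⟨x₀, hx₀⟩ := hy
  have E_def : True := trivial
  set c : EuclideanSpace ℝ (Fin m) × EuclideanSpace ℝ (Fin n) := (x₀, y) with hc_def
  have hΩc : Ωᶜ.Nonempty := aux_compl_nonempty hbdd
  set r : ℝ := infDist c Ωᶜ with hr_def
  have hr : 0 < r := (hopen.isClosed_compl.notMem_iff_infDist_pos hΩc).mp (by simpa using hx₀)
  have hballr : ball c r ⊆ Ω := ball_infDist_compl_subset
  obtain ⟨R, hRpos, hRΩ⟩ : ∃ R, 0 < R ∧ Ω ⊆ ball 0 R := by
    obtain ⟨R, hR1, hR2⟩ := hbdd.subset_ball_lt 0 0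
    exact ⟨R, hR1, hR2⟩
  have hcR : ‖c‖ < R := mem_ball_zero_iff.mp (hRΩ hx₀)
  have hΩ3R : Ω ⊆ ball 0 (3 * R) := hRΩ.trans (ball_subset_ball (by linarith))
  rw [Metric.tendstoUniformly_iff] at hH ⊢
  intro ε hε
  set ε2 : ℝ := ε / 2 with hε2_def
  have hε2 : 0 < ε2 := by positivity
  set t : ℝ := ε2 / (2 * (2 * (3 * R) + ε2)) with ht_def
  have ht0 : 0 < t := by positivity
  set δ : ℝ := t * (r / 2) with hδ_def
  have hδ0 : 0 < δ := by positivity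
  set η : ℝ := min δ (r / 8) with hη_def
  have hη0 : 0 < η := lt_min hδ0 (by positivity)
  have hηδ : η ≤ δ := min_le_left _ _
  have hηr : η ≤ r / 8 := min_le_right _ _
  filter_upwards [hH η hη0] with j hj
  have hjcne : (Ωj j)ᶜ.Nonempty := aux_compl_nonempty (hjbdd j)
  -- the small ball around c is in Ωj j
  have h1 : ball c (r / 2) ⊆ Ωj j := by
    intro z hz
    by_contra hzc
    have hz0 : infDist z (Ωj j)ᶜ = 0 := infDist_zero_of_mem hzc
    have h2 : r ≤ infDist z Ωᶜ + dist c z := infDist_le_infDist_add_dist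
    have h3 := hj z
    rw [Real.dist_eq, hz0, sub_zero, abs_of_nonneg infDist_nonneg] at h3
    have h4 : dist c z < r / 2 := by rwa [mem_ball, dist_comm] at hz
    linarith
  -- Ωj j is inside ball 0 (3R)
  have h2 : Ωj j ⊆ ball 0 (3 * R) := by
    intro z hz
    set mid : EuclideanSpace ℝ (Fin m) × EuclideanSpace ℝ (Fin n) := (2⁻¹ : ℝ) • z + (2⁻¹ : ℝ) • c with hmid_def
    have hmb : ball mid (r / 4) ⊆ Ωj j := by
      intro w hw
      have hwrite : w = (2⁻¹ : ℝ) • z + (2⁻¹ : ℝ) • (c + (2 : ℝ) • (w - mid)) := by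
        rw [hmid_def]; module
      rw [hwrite]
      refine hjconv j hz (h1 ?_) (by norm_num) (by norm_num) (by norm_num)
      rw [mem_ball, dist_eq_norm]
      have : c + (2:ℝ) • (w - mid) - c = (2:ℝ) • (w - mid) := by abel
      rw [this, norm_smul, Real.norm_ofNat]
      have hwm : ‖w - mid‖ < r / 4 := by rwa [mem_ball, dist_eq_norm] at hw
      linarith
    have h4 : r / 4 ≤ infDist mid (Ωj j)ᶜ := aux_le_infDist hjcne (by positivity) hmb
    have h5 := hj mid
    rw [Real.dist_eq, abs_lt] at h5
    have h6 : 0 < infDist mid Ωᶜ := by linarith [h5.1]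
    have h7 : mid ∈ Ω := by
      by_contra h
      have h0 : infDist mid Ωᶜ = 0 := infDist_zero_of_mem h
      linarith
    have h8 : ‖mid‖ < R := mem_ball_zero_iff.mp (hRΩ h7)
    have h9 : z = (2 : ℝ) • mid - c := by rw [hmid_def]; module
    rw [mem_ball_zero_iff, h9]
    calc ‖(2:ℝ) • mid - c‖ ≤ ‖(2:ℝ) • mid‖ + ‖c‖ := norm_sub_le _ _
      _ = 2 * ‖mid‖ + ‖c‖ := by rw [norm_smul, Real.norm_ofNat]
      _ < 3 * R := by linarith
  set S : Set (EuclideanSpace ℝ (Fin m)) := {x' | (x', y) ∈ Ω} with hS_def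
  set Sj : Set (EuclideanSpace ℝ (Fin m)) := {x' | (x', y) ∈ Ωj j} with hSj_def
  have hScne : Sᶜ.Nonempty := by
    apply aux_compl_nonempty (B := S)
    apply (isBounded_ball (x := (0 : EuclideanSpace ℝ (Fin m))) (r := R)).subset
    intro x hx
    have := mem_ball_zero_iff.mp (hRΩ hx)
    rw [mem_ball_zero_iff]
    exact lt_of_le_of_lt (norm_fst_le ((x, y) : EuclideanSpace ℝ (Fin m) × EuclideanSpace ℝ (Fin n))) this
  have hSjcne : Sjᶜ.Nonempty := by
    apply aux_compl_nonempty (B := Sj)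
    apply (isBounded_ball (x := (0 : EuclideanSpace ℝ (Fin m))) (r := 3 * R)).subset
    intro x hx
    have := mem_ball_zero_iff.mp (h2 hx)
    rw [mem_ball_zero_iff]
    exact lt_of_le_of_lt (norm_fst_le ((x, y) : EuclideanSpace ℝ (Fin m) × EuclideanSpace ℝ (Fin n))) this
  -- inclusion 1 : Sjᶜ ⊆ thickening ε2 Sᶜ
  have inc1 : Sjᶜ ⊆ thickening ε2 Sᶜ := by
    intro x hx
    rw [mem_thickening_iff]
    by_contra h
    push_neg at h
    have hb : ball x ε2 ⊆ S := by
      intro z hz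
      by_contra hzS
      exact absurd (by rwa [mem_ball, dist_comm] at hz) (not_lt.mpr (h z hzS))
    have hcore := aux_core hconv hΩ3R hballr hr hε2 hb
    have h4 : t * r ≤ infDist ((x, y) : EuclideanSpace ℝ (Fin m) × EuclideanSpace ℝ (Fin n)) Ωᶜ := aux_le_infDist hΩc (by positivity) hcore
    have h5 : infDist ((x, y) : EuclideanSpace ℝ (Fin m) × EuclideanSpace ℝ (Fin n)) (Ωj j)ᶜ = 0 := infDist_zero_of_mem hx
    have h6 := hj (x, y)
    rw [Real.dist_eq, h5, sub_zero, abs_of_nonneg infDist_nonneg] at h6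
    have : δ < t * r := by rw [hδ_def]; nlinarith
    linarith
  -- inclusion 2 : Sᶜ ⊆ thickening ε2 Sjᶜ
  have inc2 : Sᶜ ⊆ thickening ε2 Sjᶜ := by
    intro x hx
    rw [mem_thickening_iff]
    by_contra h
    push_neg at h
    have hb : ball x ε2 ⊆ Sj := by
      intro z hz
      by_contra hzS
      exact absurd (by rwa [mem_ball, dist_comm] at hz) (not_lt.mpr (h z hzS))
    have hcore := aux_core (hjconv j) h2 h1 (by positivity) hε2 hb
    have h4 : t * (r / 2) ≤ infDist ((x, y) : EuclideanSpace ℝ (Fin m) × EuclideanSpace ℝ (Fin n)) (Ωj j)ᶜ :=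
      aux_le_infDist hjcne (by positivity) hcore
    have h5 : infDist ((x, y) : EuclideanSpace ℝ (Fin m) × EuclideanSpace ℝ (Fin n)) Ωᶜ = 0 := infDist_zero_of_mem hx
    have h6 := hj (x, y)
    rw [Real.dist_eq, h5, abs_sub_comm, sub_zero, abs_of_nonneg infDist_nonneg] at h6
    have : δ ≤ infDist ((x, y) : EuclideanSpace ℝ (Fin m) × EuclideanSpace ℝ (Fin n)) (Ωj j)ᶜ := by rw [hδ_def]; exact h4
    linarith
  intro x
  have i1 : infDist x Sᶜ ≤ infDist x Sjᶜ + ε2 := aux_infDist_le_of_thickening hSjcne inc1 x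
  have i2 : infDist x Sjᶜ ≤ infDist x Sᶜ + ε2 := aux_infDist_le_of_thickening hScne inc2 x
  rw [Real.dist_eq, abs_lt]
  constructor <;> [linarith; linarith]
end

section
/- Let ω ⊂ ℝ^{d−1} be a bounded open set, d ≥ 2, γ ≥ 0, and λ, ℓ > 0. Then, with eigenvalues of the Dirichlet Laplacian on the cylinder ω × (0,ℓ) given by λ_k^D(ω) + λ_j^D((0,ℓ)), one has 0 ≥ Tr(−Δ_{ω×(0,ℓ)}^D − λ)_−^γ / (L_{γ,d}^{sc} ℓ H^{d−1}(ω) λ^{γ+d/2}) − Tr(−Δ_ω^D − λ)_−^{γ+1/2} / (L_{γ+1/2,d−1}^{sc} H^{d−1}(ω) λ^{γ+d/2}) ≥ − Tr(−Δ_ω^D − λ)_−^γ / (L_{γ,d}^{sc} ℓ H^{d−1}(ω) λ^{γ+d/2}). -/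
open MeasureTheory Real
open scoped ENNReal

/-- The `k`-th eigenvalue (k = 0,1,2,...) of the Dirichlet Laplacian on an open set
`Ω ⊆ ℝ^d`, defined via the Courant–Fischer min–max principle over finite-dimensional
subspaces of smooth compactly supported test functions supported in `Ω`. -/
noncomputable def dirichletEigenvalue (d : ℕ) (Ω : Set (EuclideanSpace ℝ (Fin d)))
    (k : ℕ) : ℝ :=
  sInf { t : ℝ |
    ∃ V : Submodule ℝ (EuclideanSpace ℝ (Fin d) → ℝ),
      Module.finrank ℝ V = k + 1 ∧
      (∀ f ∈ V, ContDiff ℝ (⊤ : ℕ∞) f ∧ HasCompactSupport f ∧ tsupport f ⊆ Ω) ∧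
      (∀ f ∈ V, ∫ x, ‖fderiv ℝ f x‖ ^ 2 ≤ t * ∫ x, (f x) ^ 2) }

/-- The `k`-th eigenvalue (k = 0,1,2,...) of the Neumann Laplacian on an open set
`Ω ⊆ ℝ^d`, defined via the Courant–Fischer min–max principle over finite-dimensional
subspaces of smooth functions with finite `H¹(Ω)`-norm (a form core for the Neumann
Laplacian by the Meyers–Serrin theorem). -/
noncomputable def neumannEigenvalue (d : ℕ) (Ω : Set (EuclideanSpace ℝ (Fin d)))
    (k : ℕ) : ℝ :=
  sInf { t : ℝ |
    ∃ V : Submodule ℝ (EuclideanSpace ℝ (Fin d) → ℝ),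
      Module.finrank ℝ V = k + 1 ∧
      (∀ f ∈ V, ContDiffOn ℝ (⊤ : ℕ∞) f Ω ∧ MemLp f 2 (volume.restrict Ω) ∧
        Integrable (fun x => ‖fderiv ℝ f x‖ ^ 2) (volume.restrict Ω)) ∧
      (∀ f ∈ V, ∫ x in Ω, ‖fderiv ℝ f x‖ ^ 2 ≤ t * ∫ x in Ω, (f x) ^ 2) }

/-- The Riesz-mean summand `(λ − μ)_+^γ` for `γ > 0`, with the convention that for `γ = 0`
it is the indicator of `μ < λ` (counting-function convention). -/
noncomputable def rieszTerm (γ lam μ : ℝ) : ℝ :=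
  if γ = 0 then (if μ < lam then 1 else 0) else (max (lam - μ) 0) ^ γ

/-- The Riesz mean `Tr(−Δ − λ)_−^γ = ∑_k (λ − μ_k)_+^γ` of a sequence of eigenvalues,
valued in `ℝ≥0∞`. -/
noncomputable def rieszMean (μ : ℕ → ℝ) (γ lam : ℝ) : ℝ≥0∞ :=
  ∑' k, ENNReal.ofReal (rieszTerm γ lam (μ k))

/-- The semiclassical constant `L_{γ,d}^{sc} = Γ(γ+1)/((4π)^{d/2} Γ(1+γ+d/2))`. -/
noncomputable def Lsc (γ : ℝ) (d : ℕ) : ℝ :=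
  Real.Gamma (γ + 1) / ((4 * Real.pi) ^ ((d : ℝ) / 2) * Real.Gamma (1 + γ + (d : ℝ) / 2))

/-- The inradius `r_in(Ω) = sup_{x ∈ Ω} dist(x, Ω^c)`. -/
noncomputable def inradius {d : ℕ} (Ω : Set (EuclideanSpace ℝ (Fin d))) : ℝ :=
  ⨆ x ∈ Ω, Metric.infDist x Ωᶜ


lemma rieszTerm_nonneg (γ lam μ : ℝ) : 0 ≤ rieszTerm γ lam μ := by
  unfold rieszTerm
  split_ifs
  · exact one_pos.le
  · exact le_refl 0
  · exact Real.rpow_nonneg (le_max_right _ _) _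

lemma rieszTerm_eq_zero' {γ lam μ : ℝ} (h : lam ≤ μ) : rieszTerm γ lam μ = 0 := by
  rcases eq_or_ne γ 0 with rfl | hγ
  · rw [rieszTerm, if_pos rfl, if_neg (not_lt.mpr h)]
  · rw [rieszTerm, if_neg hγ, max_eq_right (by linarith), Real.zero_rpow hγ]

lemma rieszTerm_antitone {γ lam : ℝ} (hγ : 0 ≤ γ) {μ₁ μ₂ : ℝ} (h : μ₁ ≤ μ₂) :
    rieszTerm γ lam μ₂ ≤ rieszTerm γ lam μ₁ := by
  unfold rieszTerm
  rcases eq_or_ne γ 0 with rfl | hγ0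
  · rw [if_pos rfl, if_pos rfl]
    split_ifs with h1 h2 h2
    · exact le_refl 1
    · exact absurd (h.trans_lt h1) h2
    · exact zero_le_one
    · exact le_refl 0
  · rw [if_neg hγ0, if_neg hγ0]
    exact Real.rpow_le_rpow (le_max_right _ _) (max_le_max (by linarith) le_rfl) hγ

lemma betaReal (γ : ℝ) (hγ : 0 ≤ γ) :
    ∫ t in (0:ℝ)..1, t ^ γ * (1 - t) ^ γ = Real.Gamma (γ+1) ^ 2 / Real.Gamma (2*γ+2) := by
  have h1 : (0:ℝ) < γ + 1 := by linarith
  have hre : 0 < (((γ+1 : ℝ)) : ℂ).re := by simpa using h1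
  have hc := Complex.Gamma_mul_Gamma_eq_betaIntegral hre hre
  have hbeta : Complex.betaIntegral ((γ+1:ℝ):ℂ) ((γ+1:ℝ):ℂ)
      = ((∫ t in (0:ℝ)..1, t ^ γ * (1 - t) ^ γ : ℝ) : ℂ) := by
    rw [Complex.betaIntegral, ← intervalIntegral.integral_ofReal]
    apply intervalIntegral.integral_congr
    intro t ht
    rw [Set.uIcc_of_le (by norm_num : (0:ℝ) ≤ 1)] at ht
    have ht0 : 0 ≤ t := ht.1
    have ht1 : 0 ≤ 1 - t := by linarith [ht.2]
    have e1 : (((γ+1:ℝ)):ℂ) - 1 = ((γ:ℝ):ℂ) := by push_cast; ring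
    rw [e1]
    push_cast
    rw [← Complex.ofReal_cpow ht0 γ, ← Complex.ofReal_one, ← Complex.ofReal_sub,
      ← Complex.ofReal_cpow ht1 γ]
  rw [hbeta, Complex.Gamma_ofReal] at hc
  have e2 : (((γ+1:ℝ)):ℂ) + (((γ+1:ℝ)):ℂ) = (((2*γ+2:ℝ)):ℂ) := by push_cast; ring
  rw [e2, Complex.Gamma_ofReal] at hc
  have hG : Real.Gamma (2*γ+2) ≠ 0 := (Real.Gamma_pos_of_pos (by linarith)).ne'
  have := hc
  rw [← Complex.ofReal_mul, ← Complex.ofReal_mul, Complex.ofReal_inj] at this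
  rw [eq_div_iff hG]
  nlinarith [this]


lemma Lsc_pos {γ : ℝ} (hγ : 0 ≤ γ) (d : ℕ) : 0 < Lsc γ d := by
  have h1 : 0 < Real.Gamma (γ + 1) := Real.Gamma_pos_of_pos (by linarith)
  have h2 : 0 < Real.Gamma (1 + γ + (d:ℝ)/2) := Real.Gamma_pos_of_pos (by positivity)
  have h3 : (0:ℝ) < (4 * Real.pi) ^ ((d : ℝ) / 2) :=
    Real.rpow_pos_of_pos (by positivity) _
  exact div_pos h1 (by positivity)

lemma four_pi_half : (4 * Real.pi) ^ ((1:ℝ) / 2) = 2 * Real.sqrt Real.pi := by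
  rw [← Real.sqrt_eq_rpow, show (4:ℝ) * Real.pi = 2^2 * Real.pi by norm_num,
    Real.sqrt_mul (by positivity), Real.sqrt_sq (by norm_num)]

lemma Gamma_three_halves : Real.Gamma (3/2 : ℝ) = Real.sqrt Real.pi / 2 := by
  have := Real.Gamma_add_one (s := (1/2 : ℝ)) (by norm_num)
  rw [show (1/2 : ℝ) + 1 = 3/2 by norm_num, Real.Gamma_one_half_eq] at this
  rw [this]; ring

lemma Lsc_zero_one : Lsc 0 1 = 1 / Real.pi := by
  rw [Lsc]
  norm_num
  rw [four_pi_half, Gamma_three_halves]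
  have h : Real.sqrt Real.pi * Real.sqrt Real.pi = Real.pi := Real.mul_self_sqrt Real.pi_pos.le
  have hs : Real.sqrt Real.pi > 0 := Real.sqrt_pos.mpr Real.pi_pos
  field_simp
  nlinarith [h]

lemma Lsc_one {γ : ℝ} : Lsc γ 1 =
    Real.Gamma (γ + 1) / (2 * Real.sqrt Real.pi * Real.Gamma (γ + 3/2)) := by
  rw [Lsc]
  norm_num
  rw [four_pi_half, show (1:ℝ) + γ + 1/2 = γ + 3/2 by ring]

lemma Lsc_split {γ : ℝ} (hγ : 0 ≤ γ) {d : ℕ} (hd : 1 ≤ d) :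
    Lsc γ d = Lsc (γ + 1/2) (d - 1) * Lsc γ 1 := by
  have hcast : ((d - 1 : ℕ) : ℝ) = (d : ℝ) - 1 := by
    rw [Nat.cast_sub hd]; norm_num
  rw [Lsc, Lsc, Lsc, hcast]
  have e1 : (γ + 1/2) + 1 = γ + 3/2 := by ring
  have e2 : (1:ℝ) + (γ + 1/2) + ((d:ℝ) - 1)/2 = 1 + γ + (d:ℝ)/2 := by ring
  have e3 : (1:ℝ) + γ + ((1:ℕ):ℝ)/2 = γ + 3/2 := by push_cast; ring
  rw [e1, e2, e3]
  have hfp : (0:ℝ) < 4 * Real.pi := by positivity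
  have e4 : (4 * Real.pi) ^ (((d:ℝ) - 1) / 2) * (4 * Real.pi) ^ (((1:ℕ):ℝ)/2)
      = (4 * Real.pi) ^ ((d:ℝ)/2) := by
    rw [← Real.rpow_add hfp]; push_cast; ring_nf
  have hG32 : Real.Gamma (γ + 3/2) ≠ 0 := (Real.Gamma_pos_of_pos (by linarith)).ne'
  have hGd : Real.Gamma (1 + γ + (d:ℝ)/2) ≠ 0 := (Real.Gamma_pos_of_pos (by positivity)).ne'
  have hp1 : ((4 * Real.pi) ^ (((d:ℝ) - 1) / 2)) ≠ 0 := (Real.rpow_pos_of_pos hfp _).ne'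
  have hp2 : ((4 * Real.pi) ^ (((1:ℕ):ℝ)/2)) ≠ 0 := (Real.rpow_pos_of_pos hfp _).ne'
  field_simp
  rw [← e4]

lemma two_rpow_arith (γ : ℝ) : (4:ℝ)^γ * (2:ℝ)^(1-(2*γ+2)) = 2⁻¹ := by
  have h4 : (4:ℝ)^γ = (2:ℝ)^(2*γ) := by
    rw [show (4:ℝ) = (2:ℝ)^(2:ℕ) by norm_num, ← Real.rpow_natCast 2 2,
      ← Real.rpow_mul (by norm_num : (0:ℝ) ≤ 2)]
    norm_num
  rw [h4, ← Real.rpow_add (by norm_num : (0:ℝ) < 2)]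
  rw [show 2*γ + (1-(2*γ+2)) = -1 by ring, Real.rpow_neg_one]

lemma const_identity (γ : ℝ) (hγ : 0 ≤ γ) :
    (4:ℝ)^γ * (Real.Gamma (γ+1) ^ 2 / Real.Gamma (2*γ+2)) / Real.pi
      = Real.Gamma (γ+1) / (2 * Real.sqrt Real.pi * Real.Gamma (γ + 3/2)) := by
  have hdup := Real.Gamma_mul_Gamma_add_half (γ+1)
  rw [show 2*(γ+1) = 2*γ+2 by ring] at hdup
  have hG1 : 0 < Real.Gamma (γ+1) := Real.Gamma_pos_of_pos (by linarith)
  have hG2 : 0 < Real.Gamma (2*γ+2) := Real.Gamma_pos_of_pos (by linarith)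
  have hG3 : 0 < Real.Gamma (γ+1+1/2) := Real.Gamma_pos_of_pos (by linarith)
  have hsp : 0 < Real.sqrt Real.pi := Real.sqrt_pos.mpr Real.pi_pos
  have hpi : Real.sqrt Real.pi * Real.sqrt Real.pi = Real.pi :=
    Real.mul_self_sqrt Real.pi_pos.le
  have harith := two_rpow_arith γ
  rw [show γ + 3/2 = γ+1+1/2 by ring]
  set G1 := Real.Gamma (γ+1) with hG1def
  set G2 := Real.Gamma (2*γ+2) with hG2def
  set G3 := Real.Gamma (γ+1+1/2) with hG3def
  set S := Real.sqrt Real.pi with hSdef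
  set A := (4:ℝ)^γ with hAdef
  set E := (2:ℝ)^(1-(2*γ+2)) with hEdef
  rw [div_eq_div_iff (by positivity) (by positivity)]
  have hGG : G1^2/G2 * G3 = G1*E*S := by
    rw [div_mul_eq_mul_div, div_eq_iff hG2.ne']
    linear_combination G1*hdup
  linear_combination (2*A*S)*hGG + (2*S*S*G1)*harith + G1*hpi

lemma F_cont {γ lam μ ℓ : ℝ} (hγ0 : γ ≠ 0) (hγ : 0 ≤ γ) :
    Continuous (fun t => rieszTerm γ lam (μ + (Real.pi * t / ℓ)^2)) := by
  simp only [rieszTerm, if_neg hγ0]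
  refine continuous_iff_continuousAt.mpr fun t => ?_
  have hin : Continuous (fun t : ℝ => max (lam - (μ + (Real.pi * t / ℓ)^2)) 0) := by
    fun_prop
  exact (Real.continuousAt_rpow_const _ _ (Or.inr hγ)).comp hin.continuousAt

lemma integral_F (γ lam μ ℓ : ℝ) (hγ : 0 ≤ γ) (hℓ : 0 < ℓ) (ha : 0 < lam - μ) (n : ℕ)
    (hn : ℓ * Real.sqrt (lam - μ) / Real.pi ≤ (n:ℝ)) :
    ∫ t in (0:ℝ)..(n:ℝ), rieszTerm γ lam (μ + (Real.pi * t / ℓ)^2)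
      = Lsc γ 1 * ℓ * rieszTerm (γ + 1/2) lam μ := by
  have hπ := Real.pi_pos
  set a := lam - μ with hadef
  set x := ℓ * Real.sqrt a / Real.pi with hxdef
  have hsa : 0 < Real.sqrt a := Real.sqrt_pos.mpr ha
  have hx : 0 < x := by positivity
  have hxn : x ≤ (n:ℝ) := hn
  have hkey : Real.pi * x / ℓ = Real.sqrt a := by
    rw [hxdef]; field_simp
  have hFzero : ∀ t : ℝ, x ≤ t → rieszTerm γ lam (μ + (Real.pi*t/ℓ)^2) = 0 := by
    intro t ht
    apply rieszTerm_eq_zero'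
    have h1 : Real.sqrt a ≤ Real.pi * t / ℓ := by rw [← hkey]; gcongr
    have h2 : a ≤ (Real.pi*t/ℓ)^2 := by
      calc a = (Real.sqrt a)^2 := (Real.sq_sqrt ha.le).symm
      _ ≤ (Real.pi*t/ℓ)^2 := pow_le_pow_left₀ hsa.le h1 2
    linarith
  have hrhs : rieszTerm (γ + 1/2) lam μ = a ^ (γ + 1/2 : ℝ) := by
    rw [rieszTerm, if_neg (by positivity : γ+1/2 ≠ 0), max_eq_left ha.le]
  rcases eq_or_ne γ 0 with rfl | hγ0
  · -- γ = 0 : counting / indicator case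
    have hind : (fun t => rieszTerm 0 lam (μ + (Real.pi*t/ℓ)^2))
        = Set.indicator (Set.Ioo (-x) x) (fun _ => (1:ℝ)) := by
      funext t
      rw [rieszTerm, if_pos rfl]
      have hiff : μ + (Real.pi*t/ℓ)^2 < lam ↔ t ∈ Set.Ioo (-x) x := by
        rw [Set.mem_Ioo, ← abs_lt]
        have habs : |Real.pi*t/ℓ| = |t| * (Real.pi/ℓ) := by
          rw [abs_div, abs_mul, abs_of_pos hπ, abs_of_pos hℓ]; ring
        have hxx : Real.pi * x / ℓ = x * (Real.pi/ℓ) := by ring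
        have hpl : (0:ℝ) < Real.pi / ℓ := by positivity
        constructor
        · intro h
          have h2 : (Real.pi*t/ℓ)^2 < (Real.sqrt a)^2 := by
            rw [Real.sq_sqrt ha.le]; linarith
          have h3 := abs_lt_of_sq_lt_sq h2 hsa.le
          rw [habs, ← hkey, hxx] at h3
          exact lt_of_mul_lt_mul_right h3 hpl.le
        · intro h4
          have h3 : |Real.pi*t/ℓ| < |Real.sqrt a| := by
            rw [habs, abs_of_nonneg (Real.sqrt_nonneg a), ← hkey, hxx]
            exact mul_lt_mul_of_pos_right h4 hpl
          have h2 := sq_lt_sq.mpr h3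
          rw [Real.sq_sqrt ha.le] at h2
          linarith
      by_cases h : μ + (Real.pi*t/ℓ)^2 < lam
      · rw [if_pos h, Set.indicator_of_mem (hiff.mp h)]
      · rw [if_neg h, Set.indicator_of_notMem (fun hm => h (hiff.mpr hm))]
    rw [hind, intervalIntegral.integral_of_le (by positivity : (0:ℝ) ≤ (n:ℝ)),
      MeasureTheory.integral_indicator measurableSet_Ioo,
      Measure.restrict_restrict measurableSet_Ioo]
    have hset : Set.Ioo (-x) x ∩ Set.Ioc 0 (n:ℝ) = Set.Ioo 0 x := by
      ext t
      simp only [Set.mem_inter_iff, Set.mem_Ioo, Set.mem_Ioc]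
      constructor
      · rintro ⟨⟨h1, h2⟩, h3, h4⟩; exact ⟨h3, h2⟩
      · rintro ⟨h1, h2⟩
        exact ⟨⟨by linarith, h2⟩, h1, by linarith⟩
    rw [hset]
    simp only [MeasureTheory.setIntegral_const, smul_eq_mul, mul_one, Real.volume_Ioo]
    rw [Real.volume_real_Ioo_of_le hx.le, hrhs, Lsc_zero_one]
    rw [show (0:ℝ) + 1/2 = 1/2 by norm_num, ← Real.sqrt_eq_rpow]
    rw [hxdef]; field_simp; ring
  · -- γ > 0 : beta integral case
    have hγpos : 0 < γ := lt_of_le_of_ne hγ (Ne.symm hγ0)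
    have hcont : Continuous (fun t => rieszTerm γ lam (μ + (Real.pi * t / ℓ)^2)) :=
      F_cont hγ0 hγ
    set F := fun t : ℝ => rieszTerm γ lam (μ + (Real.pi * t / ℓ)^2) with hFdef
    have hInt : ∀ u v : ℝ, IntervalIntegrable F volume u v :=
      fun u v => hcont.intervalIntegrable u v
    have h1 : ∫ t in (0:ℝ)..(n:ℝ), F t = ∫ t in (0:ℝ)..x, F t := by
      rw [← intervalIntegral.integral_add_adjacent_intervals (hInt 0 x) (hInt x n)]
      have hz : ∫ t in x..(n:ℝ), F t = ∫ t in x..(n:ℝ), (0:ℝ) := by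
        apply intervalIntegral.integral_congr
        intro t ht
        rw [Set.uIcc_of_le hxn] at ht
        exact hFzero t ht.1
      rw [hz, intervalIntegral.integral_zero, add_zero]
    have heven : ∀ t : ℝ, F (-t) = F t := by
      intro t
      simp only [hFdef]
      congr 2
      ring
    have h2 : ∫ t in (-x)..(0:ℝ), F t = ∫ t in (0:ℝ)..x, F t := by
      have hcn := intervalIntegral.integral_comp_neg (a := (0:ℝ)) (b := x) F
      rw [neg_zero] at hcn
      rw [← hcn]
      exact intervalIntegral.integral_congr fun t _ => heven t
    have h3 : ∫ t in (-x)..x, F t = 2 * ∫ t in (0:ℝ)..x, F t := by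
      rw [← intervalIntegral.integral_add_adjacent_intervals (hInt (-x) 0) (hInt 0 x), h2]
      ring
    have h4 : (2*x) * ∫ τ in (0:ℝ)..1, F (2*x*τ + -x) = ∫ t in (-x)..x, F t := by
      have hs := intervalIntegral.smul_integral_comp_mul_add (a := (0:ℝ)) (b := 1) F (2*x) (-x)
      rw [smul_eq_mul] at hs
      rw [hs]
      norm_num
      rw [show 2*x + -x = x by ring]
    have h5 : ∫ τ in (0:ℝ)..1, F (2*x*τ + -x)
        = (4*a)^γ * (Real.Gamma (γ+1)^2 / Real.Gamma (2*γ+2)) := by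
      have hcg : ∀ τ ∈ Set.uIcc (0:ℝ) 1, F (2*x*τ + -x) = (4*a)^γ * (τ^γ * (1-τ)^γ) := by
        intro τ hτ
        rw [Set.uIcc_of_le (by norm_num : (0:ℝ) ≤ 1)] at hτ
        obtain ⟨hτ0, hτ1⟩ := hτ
        have e1 : Real.pi * (2*x*τ + -x)/ℓ = Real.sqrt a * (2*τ - 1) := by
          have e0 : Real.pi * (2*x*τ + -x)/ℓ = (Real.pi * x/ℓ) * (2*τ - 1) := by ring
          rw [e0, hkey]
        simp only [hFdef, rieszTerm, if_neg hγ0]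
        rw [e1]
        have hsq : (Real.sqrt a)^2 = a := Real.sq_sqrt ha.le
        have e2 : lam - (μ + (Real.sqrt a*(2*τ-1))^2) = (4*a)*(τ*(1-τ)) := by
          nlinarith [hsq]
        have hτnn : (0:ℝ) ≤ τ*(1-τ) := mul_nonneg hτ0 (by linarith)
        rw [e2, max_eq_left (mul_nonneg (by linarith : (0:ℝ) ≤ 4*a) hτnn)]
        rw [Real.mul_rpow (by linarith : (0:ℝ) ≤ 4*a) hτnn,
          Real.mul_rpow hτ0 (by linarith : (0:ℝ) ≤ 1-τ)]
      rw [intervalIntegral.integral_congr hcg, intervalIntegral.integral_const_mul,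
        betaReal γ hγ]
    have hc := const_identity γ hγ
    have har : a ^ (γ + 1/2:ℝ) = a ^ γ * Real.sqrt a := by
      rw [Real.rpow_add ha, Real.sqrt_eq_rpow]
    have h4a : (4*a)^γ = 4^γ * a^γ := Real.mul_rpow (by norm_num) ha.le
    rw [h1, show ∫ t in (0:ℝ)..x, F t = (1/2) * ∫ t in (-x)..x, F t from by rw [h3]; ring,
      ← h4, h5, hrhs, Lsc_one, har, h4a, hxdef]
    have hG3 : 0 < Real.Gamma (γ + 3/2) := Real.Gamma_pos_of_pos (by linarith)
    have hsp : 0 < Real.sqrt Real.pi := Real.sqrt_pos.mpr Real.pi_pos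
    have hG1p : 0 < Real.Gamma (γ+1) := Real.Gamma_pos_of_pos (by linarith)
    have hG2p : 0 < Real.Gamma (2*γ+2) := Real.Gamma_pos_of_pos (by linarith)
    set S := Real.sqrt Real.pi with hS
    set SA := Real.sqrt a with hSA
    set G1 := Real.Gamma (γ+1) with hG1d
    set G2 := Real.Gamma (2*γ+2) with hG2d
    set G3 := Real.Gamma (γ+3/2) with hG3d
    set A := (4:ℝ)^γ with hA
    set B := a^γ with hB
    linear_combination (ℓ*SA*B) * hc

lemma polya_interval (γ lam μ ℓ : ℝ) (hγ : 0 ≤ γ) (hℓ : 0 < ℓ) :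
    (∑' j : ℕ, ENNReal.ofReal (rieszTerm γ lam (μ + (Real.pi * ((j:ℝ)+1) / ℓ)^2))
       ≤ ENNReal.ofReal (Lsc γ 1 * ℓ * rieszTerm (γ + 1/2) lam μ)) ∧
    (ENNReal.ofReal (Lsc γ 1 * ℓ * rieszTerm (γ + 1/2) lam μ)
       ≤ (∑' j : ℕ, ENNReal.ofReal (rieszTerm γ lam (μ + (Real.pi * ((j:ℝ)+1) / ℓ)^2)))
         + ENNReal.ofReal (rieszTerm γ lam μ)) := by
  have hπ := Real.pi_pos
  rcases le_or_gt lam μ with hle | hlt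
  · have hz : ∀ j : ℕ, rieszTerm γ lam (μ + (Real.pi * ((j:ℝ)+1)/ℓ)^2) = 0 := fun j =>
      rieszTerm_eq_zero' (le_add_of_le_of_nonneg hle (sq_nonneg _))
    have hz2 : rieszTerm (γ + 1/2) lam μ = 0 := rieszTerm_eq_zero' hle
    constructor
    · simp [hz, hz2]
    · rw [hz2, mul_zero, ENNReal.ofReal_zero]
      exact zero_le
  · have ha : 0 < lam - μ := by linarith
    set a := lam - μ with hadef
    set x := ℓ * Real.sqrt a / Real.pi with hxdef
    have hsa : 0 < Real.sqrt a := Real.sqrt_pos.mpr ha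
    have hx : 0 < x := by positivity
    set n := ⌈x⌉₊ with hndef
    have hn1 : 0 < n := Nat.ceil_pos.mpr hx
    have hxn : x ≤ (n:ℝ) := Nat.le_ceil x
    clear_value n
    have hkey : Real.pi * x / ℓ = Real.sqrt a := by rw [hxdef]; field_simp
    have hFzero : ∀ t : ℝ, x ≤ t → rieszTerm γ lam (μ + (Real.pi*t/ℓ)^2) = 0 := by
      intro t ht
      apply rieszTerm_eq_zero'
      have h1 : Real.sqrt a ≤ Real.pi * t / ℓ := by rw [← hkey]; gcongr
      have h2 : a ≤ (Real.pi*t/ℓ)^2 := by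
        calc a = (Real.sqrt a)^2 := (Real.sq_sqrt ha.le).symm
        _ ≤ (Real.pi*t/ℓ)^2 := pow_le_pow_left₀ hsa.le h1 2
      linarith
    set F := fun t : ℝ => rieszTerm γ lam (μ + (Real.pi * t/ℓ)^2) with hF
    have hAnti : AntitoneOn F (Set.Icc (0:ℝ) (0 + (n:ℝ))) := by
      intro s hs t ht hst
      apply rieszTerm_antitone hγ
      have h0s : (0:ℝ) ≤ s := hs.1
      have hsq : (Real.pi * s/ℓ)^2 ≤ (Real.pi * t/ℓ)^2 := by
        have h1 : (0:ℝ) ≤ Real.pi * s/ℓ := by positivity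
        have h2 : Real.pi * s/ℓ ≤ Real.pi * t/ℓ := by gcongr
        exact pow_le_pow_left₀ h1 h2 2
      linarith
    have hzero : ∀ j : ℕ, j ∉ Finset.range n → ENNReal.ofReal (F ((j:ℝ)+1)) = 0 := by
      intro j hj
      rw [Finset.mem_range, not_lt] at hj
      have : x ≤ (j:ℝ)+1 := by
        calc x ≤ (n:ℝ) := hxn
        _ ≤ (j:ℝ) := by exact_mod_cast hj
        _ ≤ (j:ℝ)+1 := by linarith
      rw [hF]
      simp only []
      rw [hFzero _ this, ENNReal.ofReal_zero]
    have hsum : ∑' j:ℕ, ENNReal.ofReal (F ((j:ℝ)+1))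
        = ENNReal.ofReal (∑ j ∈ Finset.range n, F ((j:ℝ)+1)) := by
      rw [tsum_eq_sum hzero, ENNReal.ofReal_sum_of_nonneg (fun i _ => rieszTerm_nonneg _ _ _)]
    have hIF : ∫ t in (0:ℝ)..(0 + (n:ℝ)), F t = Lsc γ 1 * ℓ * rieszTerm (γ + 1/2) lam μ := by
      rw [zero_add]
      exact integral_F γ lam μ ℓ hγ hℓ ha n hxn
    constructor
    · rw [hsum]
      apply ENNReal.ofReal_le_ofReal
      calc ∑ j ∈ Finset.range n, F ((j:ℝ)+1)
          = ∑ j ∈ Finset.range n, F (0 + ((j+1 : ℕ) : ℝ)) := by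
            refine Finset.sum_congr rfl fun i _ => ?_
            norm_num
        _ ≤ ∫ t in (0:ℝ)..(0 + (n:ℝ)), F t := hAnti.sum_le_integral
        _ = Lsc γ 1 * ℓ * rieszTerm (γ + 1/2) lam μ := hIF
    · have hint := hAnti.integral_le_sum
      rw [hIF] at hint
      obtain ⟨m, rfl⟩ : ∃ m, n = m + 1 := ⟨n - 1, (Nat.succ_pred_eq_of_pos hn1).symm⟩
      have hsplit : ∑ i ∈ Finset.range (m+1), F (0 + (i : ℝ))
          = (∑ i ∈ Finset.range m, F ((i:ℝ)+1)) + F 0 := by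
        rw [Finset.sum_range_succ']
        congr 1
        · refine Finset.sum_congr rfl fun i _ => ?_
          norm_num
        · norm_num
      have hF0 : F 0 = rieszTerm γ lam μ := by
        rw [hF]
        norm_num
      calc ENNReal.ofReal (Lsc γ 1 * ℓ * rieszTerm (γ + 1/2) lam μ)
          ≤ ENNReal.ofReal ((∑ i ∈ Finset.range m, F ((i:ℝ)+1)) + F 0) := by
            apply ENNReal.ofReal_le_ofReal
            calc Lsc γ 1 * ℓ * rieszTerm (γ + 1/2) lam μ
                ≤ ∑ i ∈ Finset.range (m+1), F (0 + (i : ℝ)) := by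
                  refine le_trans hint ?_
                  refine le_of_eq (Finset.sum_congr rfl fun i _ => rfl)
              _ = _ := hsplit
        _ ≤ ENNReal.ofReal (∑ i ∈ Finset.range m, F ((i:ℝ)+1)) + ENNReal.ofReal (F 0) :=
            ENNReal.ofReal_add_le
        _ ≤ (∑' j:ℕ, ENNReal.ofReal (F ((j:ℝ)+1))) + ENNReal.ofReal (rieszTerm γ lam μ) := by
            rw [hF0]
            gcongr
            rw [ENNReal.ofReal_sum_of_nonneg (fun i _ => rieszTerm_nonneg _ _ _)]
            exact ENNReal.sum_le_tsum _

/-- Cylinder lemma (Dirichlet case). Let `ω ⊂ ℝ^{d−1}` be a bounded open set, `d ≥ 2`,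
`γ ≥ 0`, `λ, ℓ > 0`. The eigenvalues of the Dirichlet Laplacian on the cylinder
`ω × (0,ℓ)` are `λ_k^D(ω) + (π j/ℓ)²` (`j ≥ 1`), so its Riesz mean is the double sum
`Tcyl` below. Then
`0 ≥ Tcyl/(L_{γ,d}^{sc} ℓ H^{d−1}(ω) λ^{γ+d/2}) − Tr(−Δ_ω^D−λ)_−^{γ+1/2}/(L_{γ+1/2,d−1}^{sc} H^{d−1}(ω) λ^{γ+d/2}) ≥ −Tr(−Δ_ω^D−λ)_−^γ/(L_{γ,d}^{sc} ℓ H^{d−1}(ω) λ^{γ+d/2})`,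
stated here in the equivalent form obtained by multiplying through by the positive
quantity `L_{γ,d}^{sc} ℓ · L_{γ+1/2,d−1}^{sc} · H^{d−1}(ω) λ^{γ+d/2}`. -/
theorem cylinder_lemma_dirichlet (d : ℕ) (hd : 2 ≤ d)
    (ω : Set (EuclideanSpace ℝ (Fin (d - 1)))) (hopen : IsOpen ω)
    (hbdd : Bornology.IsBounded ω) (γ : ℝ) (hγ : 0 ≤ γ) (lam ℓ : ℝ)
    (hlam : 0 < lam) (hℓ : 0 < ℓ) :
    (ENNReal.ofReal (Lsc (γ + 1/2) (d - 1)) *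
        ∑' p : ℕ × ℕ, ENNReal.ofReal (rieszTerm γ lam
          (dirichletEigenvalue (d - 1) ω p.1 + (Real.pi * (p.2 + 1) / ℓ) ^ 2)) ≤
      ENNReal.ofReal (Lsc γ d * ℓ) *
        rieszMean (dirichletEigenvalue (d - 1) ω) (γ + 1/2) lam) ∧
    (ENNReal.ofReal (Lsc γ d * ℓ) *
        rieszMean (dirichletEigenvalue (d - 1) ω) (γ + 1/2) lam ≤
      ENNReal.ofReal (Lsc (γ + 1/2) (d - 1)) *
        ∑' p : ℕ × ℕ, ENNReal.ofReal (rieszTerm γ lam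
          (dirichletEigenvalue (d - 1) ω p.1 + (Real.pi * (p.2 + 1) / ℓ) ^ 2)) +
      ENNReal.ofReal (Lsc (γ + 1/2) (d - 1)) *
        rieszMean (dirichletEigenvalue (d - 1) ω) γ lam) := by
  set μk := dirichletEigenvalue (d - 1) ω with hμk
  have key := fun k => polya_interval γ lam (μk k) ℓ hγ hℓ
  have hL2 : 0 < Lsc (γ + 1/2) (d - 1) := Lsc_pos (by linarith) _
  have hL1 : 0 < Lsc γ 1 := Lsc_pos hγ _
  have hLd : 0 < Lsc γ d := Lsc_pos hγ _
  have hsplit : ∀ r : ℝ, Lsc γ d * ℓ * r = Lsc (γ + 1/2) (d - 1) * (Lsc γ 1 * ℓ * r) := by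
    intro r
    rw [Lsc_split hγ (le_trans one_le_two hd)]
    ring
  have hprod : ∑' p : ℕ × ℕ, ENNReal.ofReal (rieszTerm γ lam
        (μk p.1 + (Real.pi * ((p.2:ℝ) + 1) / ℓ) ^ 2))
      = ∑' (k : ℕ) (j : ℕ), ENNReal.ofReal (rieszTerm γ lam
        (μk k + (Real.pi * ((j:ℝ) + 1) / ℓ) ^ 2)) := ENNReal.tsum_prod'
  have hrm : ∀ γ' : ℝ, rieszMean μk γ' lam = ∑' k, ENNReal.ofReal (rieszTerm γ' lam (μk k)) :=
    fun _ => rfl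
  have hconst : ∀ k : ℕ, ENNReal.ofReal (Lsc γ d * ℓ) * ENNReal.ofReal (rieszTerm (γ + 1/2) lam (μk k))
      = ENNReal.ofReal (Lsc (γ + 1/2) (d - 1)) * ENNReal.ofReal (Lsc γ 1 * ℓ * rieszTerm (γ + 1/2) lam (μk k)) := by
    intro k
    rw [← ENNReal.ofReal_mul (by positivity), ← ENNReal.ofReal_mul hL2.le, hsplit]
  constructor
  · rw [hprod, hrm, ← ENNReal.tsum_mul_left, ← ENNReal.tsum_mul_left]
    refine ENNReal.tsum_le_tsum fun k => ?_
    rw [hconst k]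
    exact mul_le_mul_right (key k).1 _
  · rw [hprod, hrm, hrm, ← ENNReal.tsum_mul_left, ← ENNReal.tsum_mul_left,
      ← ENNReal.tsum_mul_left, ← ENNReal.tsum_add]
    refine ENNReal.tsum_le_tsum fun k => ?_
    rw [hconst k, ← mul_add]
    exact mul_le_mul_right (key k).2 _
end
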